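/- Step-norm bound: let J̃ be an N×(ML) real matrix with Gram matrix G = J̃ᵀ J̃ symmetric positive definite with all eigenvalues in [λ_min, λ_max], F = (1/M)·J̃ J̃ᵀ, λ > 0, K ∈ ℝ^{(ML)×M} the vertical stack of L copies of the M×M identity, and J = J̃ K. Then for every r ∈ ℝᴹ, ‖(1/M)·(F + λI)⁻¹ J r‖₂ ≤ (1/M)·√( λ_max · λM / (λM + λ_min) )·(√L/λ)·‖r‖₂. -/

import Mathlib

/-!
With `m = λM`, the push-through identity `(F + λI) (M J̃) = J̃ (G + mI)` turns the step
into `J̃ w` with `(G + mI) w = K r`, and `‖J̃ w‖² = wᵀ G w`. Every eigenvalue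
`μ ∈ [λ_min, λ_max]` of `G` satisfies `μ ≤ c (μ + m)²` with `c = λ_max / ((λ_min + m) m)`,
so `c (G + mI)² - G` is positive semidefinite by the functional calculus, whence
`wᵀ G w ≤ c ‖K r‖² = c L ‖r‖²`.
-/

open Matrix

/-- The Euclidean (ℓ²) norm of a real vector. -/
noncomputable def euclidNorm {n : Type*} [Fintype n] (v : n → ℝ) : ℝ :=
  Real.sqrt (v ⬝ᵥ v)

lemma le_div_mul_add_sq {a b s μ : ℝ} (ha : 0 ≤ a) (hs : 0 < s) (haμ : a ≤ μ) (hμb : μ ≤ b) :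
    μ ≤ b / ((a + s) * s) * (μ + s) ^ 2 := by
  rw [div_mul_eq_mul_div, le_div_iff₀ (by positivity)]
  have hμ : 0 ≤ μ := ha.trans haμ
  have hden : (a + s) * s ≤ (μ + s) ^ 2 := by nlinarith
  nlinarith [mul_le_mul_of_nonneg_left hden hμ,
    mul_le_mul_of_nonneg_right hμb (sq_nonneg (μ + s))]

lemma sqrt_div_mul_eq {a b s M L x : ℝ} (ha : 0 ≤ a) (hs : 0 < s) (hM : 0 < M) (hL : 0 ≤ L)
    (hx : 0 ≤ x) :
    √(b / ((a + s * M) * (s * M)) * (L * x)) =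
      1 / M * √(b * (s * M) / (s * M + a)) * (√L / s) * √x := by
  have hsM : 0 < s * M := mul_pos hs hM
  have hc : b / ((a + s * M) * (s * M)) = b * (s * M) / (s * M + a) / (s * M) ^ 2 := by
    field_simp
    ring
  rw [hc, Real.sqrt_mul' _ (mul_nonneg hL hx), Real.sqrt_div' _ (sq_nonneg _),
    Real.sqrt_sq hsM.le, Real.sqrt_mul hL]
  field_simp

namespace Matrix

variable {m n : Type*} [Fintype m] [Fintype n]

theorem inv_mul_eq_mul_inv_of_mul_eq [DecidableEq m] [DecidableEq n] {R : Type*} [CommRing R]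
    {A : Matrix m m R} {B : Matrix n n R} {X Y : Matrix m n R} (hA : IsUnit A) (hB : IsUnit B)
    (h : A * X = Y * B) : A⁻¹ * Y = X * B⁻¹ := by
  rw [isUnit_iff_isUnit_det] at hA hB
  calc A⁻¹ * Y = A⁻¹ * (Y * B) * B⁻¹ := by
        rw [Matrix.mul_assoc, Matrix.mul_assoc, mul_nonsing_inv _ hB, Matrix.mul_one]
    _ = X * B⁻¹ := by rw [← h, ← Matrix.mul_assoc, nonsing_inv_mul _ hA, Matrix.one_mul]

open scoped ComplexOrder in
theorem PosSemidef.isUnit_add_smul_one [DecidableEq n] {𝕜 : Type*} [RCLike 𝕜]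
    {A : Matrix n n 𝕜} (hA : A.PosSemidef) {c : 𝕜} (hc : 0 < c) : IsUnit (A + c • 1) :=
  (PosDef.posSemidef_add hA (PosDef.one.smul hc)).isUnit

theorem inv_one_div_smul_mul_transpose_add_smul_one_mul [DecidableEq m] [DecidableEq n]
    (X : Matrix m n ℝ) {c s : ℝ} (hc : 0 < c) (hs : 0 < s) :
    ((1 / c) • (X * Xᵀ) + s • 1)⁻¹ * X = c • X * (Xᵀ * X + (s * c) • 1)⁻¹ := by
  have hXXt : (X * Xᵀ).PosSemidef := by
    rw [← conjTranspose_eq_transpose_of_trivial]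
    exact posSemidef_self_mul_conjTranspose X
  have hXtX : (Xᵀ * X).PosSemidef := by
    rw [← conjTranspose_eq_transpose_of_trivial]
    exact posSemidef_conjTranspose_mul_self X
  refine inv_mul_eq_mul_inv_of_mul_eq ((hXXt.smul (by positivity)).isUnit_add_smul_one hs)
    (hXtX.isUnit_add_smul_one (mul_pos hs hc)) ?_
  rw [Matrix.add_mul, Matrix.mul_add, Matrix.smul_mul, Matrix.mul_smul, smul_smul,
    Matrix.mul_assoc, one_div_mul_cancel hc.ne', one_smul, Matrix.smul_mul, Matrix.one_mul,
    Matrix.mul_smul, Matrix.mul_one, smul_smul, mul_comm]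

theorem exists_mulVec_eq_smul_of_mem_spectrum [DecidableEq n] {K : Type*} [Field K]
    {A : Matrix n n K} {μ : K} (h : μ ∈ spectrum K A) :
    ∃ p : n → K, p ≠ 0 ∧ A *ᵥ p = μ • p := by
  rw [← spectrum_toLin', ← Module.End.hasEigenvalue_iff_mem_spectrum] at h
  obtain ⟨p, hp⟩ := h.exists_hasEigenvector
  exact ⟨p, hp.2, by simpa using hp.apply_eq_smul⟩

theorem mulVec_dotProduct_mulVec_self {R : Type*} [CommSemiring R] (A : Matrix m n R)
    (w : n → R) : A *ᵥ w ⬝ᵥ A *ᵥ w = w ⬝ᵥ (Aᵀ * A) *ᵥ w := by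
  rw [← mulVec_mulVec, dotProduct_mulVec, ← mulVec_transpose, dotProduct_comm]

theorem ite_snd_mulVec {ι R : Type*} [Fintype ι] [DecidableEq n] [Semiring R] (r : n → R) :
    (fun p : ι × n => fun j => if p.2 = j then (1 : R) else 0 : Matrix (ι × n) n R) *ᵥ r =
      fun p => r p.2 := by
  ext p
  simp [mulVec, dotProduct]

theorem comp_snd_dotProduct_comp_snd {ι R : Type*} [Fintype ι] [CommSemiring R] (v w : n → R) :
    (fun p : ι × n => v p.2) ⬝ᵥ (fun p => w p.2) = Fintype.card ι * (v ⬝ᵥ w) := by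
  simp [dotProduct, Fintype.sum_prod_type, Finset.sum_const]

open scoped MatrixOrder in
theorem IsHermitian.dotProduct_mulVec_le_of_spectrum_subset_Icc [DecidableEq n]
    {A : Matrix n n ℝ} (hA : A.IsHermitian) {a b s : ℝ} (ha : 0 ≤ a) (hs : 0 < s)
    (hspec : spectrum ℝ A ⊆ Set.Icc a b) (w : n → ℝ) :
    w ⬝ᵥ A *ᵥ w ≤ b / ((a + s) * s) * ((A + s • 1) *ᵥ w ⬝ᵥ (A + s • 1) *ᵥ w) := by
  set c := b / ((a + s) * s)
  set S := A + s • (1 : Matrix n n ℝ)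
  have hS : Sᵀ = S := by
    rw [transpose_add, transpose_smul, transpose_one, ← conjTranspose_eq_transpose_of_trivial,
      hA.eq]
  have hcfc : cfc (fun t => c * (t + s) ^ 2 - t) A = c • S ^ 2 - A := by
    rw [cfc_sub _ _ A, cfc_const_mul _ _ A, cfc_pow _ _ A, cfc_add_const _ _ A, cfc_id' ℝ A,
      Algebra.algebraMap_eq_smul_one]
  have hpsd : (c • S ^ 2 - A).PosSemidef := by
    rw [← hcfc, ← nonneg_iff_posSemidef]
    refine cfc_nonneg fun μ hμ => ?_
    obtain ⟨haμ, hμb⟩ := hspec hμ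
    exact sub_nonneg.2 (le_div_mul_add_sq ha hs haμ hμb)
  have hSS : w ⬝ᵥ (S ^ 2) *ᵥ w = S *ᵥ w ⬝ᵥ S *ᵥ w := by
    rw [sq, ← mulVec_mulVec, dotProduct_mulVec, ← mulVec_transpose, hS]
  have := hpsd.dotProduct_mulVec_nonneg w
  rwa [star_trivial, sub_mulVec, dotProduct_sub, smul_mulVec, dotProduct_smul, hSS,
    smul_eq_mul, sub_nonneg] at this

end Matrix

theorem step_norm_bound_general (N M L : ℕ) (hM : 1 ≤ M) (lam : ℝ) (hlam : 0 < lam)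
    (Jt : Matrix (Fin N) (Fin L × Fin M) ℝ)
    (G : Matrix (Fin L × Fin M) (Fin L × Fin M) ℝ) (hG : G = Jtᵀ * Jt)
    (lamMin lamMax : ℝ) (hpos : 0 < lamMin)
    (heig : ∀ μ : ℝ, (∃ p : Fin L × Fin M → ℝ, p ≠ 0 ∧ G.mulVec p = μ • p) →
      lamMin ≤ μ ∧ μ ≤ lamMax)
    (F : Matrix (Fin N) (Fin N) ℝ) (hF : F = (1 / (M : ℝ)) • (Jt * Jtᵀ))
    (K : Matrix (Fin L × Fin M) (Fin M) ℝ)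
    (hK : K = fun p j => if p.2 = j then (1 : ℝ) else 0)
    (J : Matrix (Fin N) (Fin M) ℝ) (hJ : J = Jt * K)
    (r : Fin M → ℝ) :
    euclidNorm ((1 / (M : ℝ)) •
        ((F + lam • (1 : Matrix (Fin N) (Fin N) ℝ))⁻¹ * J).mulVec r) ≤
      (1 / (M : ℝ)) * Real.sqrt (lamMax * (lam * (M : ℝ)) / (lam * (M : ℝ) + lamMin)) *
        (Real.sqrt (L : ℝ) / lam) * euclidNorm r := by
  have hMpos : (0 : ℝ) < M := Nat.cast_pos.2 hM
  have hm : 0 < lam * M := mul_pos hlam hMpos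
  have hGpsd : G.PosSemidef := by
    rw [hG, ← conjTranspose_eq_transpose_of_trivial]
    exact posSemidef_conjTranspose_mul_self Jt
  set w := (G + (lam * M) • 1)⁻¹ *ᵥ (K *ᵥ r)
  have hstep : (1 / (M : ℝ)) • ((F + lam • 1)⁻¹ * J) *ᵥ r = Jt *ᵥ w := by
    rw [hF, hJ, ← Matrix.mul_assoc, inv_one_div_smul_mul_transpose_add_smul_one_mul Jt hMpos hlam,
      ← hG, Matrix.smul_mul, Matrix.smul_mul, smul_mulVec, smul_smul,
      one_div_mul_cancel hMpos.ne', one_smul, ← mulVec_mulVec, ← mulVec_mulVec]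
  have hw : (G + (lam * M) • 1) *ᵥ w = K *ᵥ r := by
    rw [mulVec_mulVec, mul_nonsing_inv _ ((isUnit_iff_isUnit_det _).1
      (hGpsd.isUnit_add_smul_one hm)), one_mulVec]
  have hquad := hGpsd.isHermitian.dotProduct_mulVec_le_of_spectrum_subset_Icc hpos.le hm
    (fun μ hμ => heig μ (exists_mulVec_eq_smul_of_mem_spectrum hμ)) w
  rw [hw, hK, ite_snd_mulVec, comp_snd_dotProduct_comp_snd, Fintype.card_fin, hG,
    ← mulVec_dotProduct_mulVec_self] at hquad
  unfold euclidNorm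
  rw [hstep]
  have hr : 0 ≤ r ⬝ᵥ r := by simpa using dotProduct_self_star_nonneg r
  exact (Real.sqrt_le_sqrt hquad).trans_eq (sqrt_div_mul_eq hpos.le hlam hMpos L.cast_nonneg hr)

/-- Step-norm bound: let `J̃` be `N × (ML)` with Gram matrix `G = J̃ᵀ * J̃` symmetric positive
definite with all eigenvalues in `[λ_min, λ_max]`, `F = (1/M) • (J̃ * J̃ᵀ)`, `λ > 0`, `K` the
vertical stack of `L` copies of the `M × M` identity, and `J = J̃ * K`. Then for every `r ∈ ℝᴹ`,
`‖(1/M) • (F + λI)⁻¹ J r‖₂ ≤ (1/M)·√(λ_max·λM/(λM + λ_min))·(√L/λ)·‖r‖₂`. -/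
theorem step_norm_bound (N M L : ℕ) (hM : 1 ≤ M) (lam : ℝ) (hlam : 0 < lam)
    (Jt : Matrix (Fin N) (Fin L × Fin M) ℝ)
    (G : Matrix (Fin L × Fin M) (Fin L × Fin M) ℝ) (hG : G = Jtᵀ * Jt)
    (hGpd : G.PosDef) (lamMin lamMax : ℝ) (hpos : 0 < lamMin) (hle : lamMin ≤ lamMax)
    (heig : ∀ μ : ℝ, (∃ p : Fin L × Fin M → ℝ, p ≠ 0 ∧ G.mulVec p = μ • p) →
      lamMin ≤ μ ∧ μ ≤ lamMax)
    (F : Matrix (Fin N) (Fin N) ℝ) (hF : F = (1 / (M : ℝ)) • (Jt * Jtᵀ))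
    (K : Matrix (Fin L × Fin M) (Fin M) ℝ)
    (hK : K = fun p j => if p.2 = j then (1 : ℝ) else 0)
    (J : Matrix (Fin N) (Fin M) ℝ) (hJ : J = Jt * K)
    (r : Fin M → ℝ) :
    euclidNorm ((1 / (M : ℝ)) •
        ((F + lam • (1 : Matrix (Fin N) (Fin N) ℝ))⁻¹ * J).mulVec r) ≤
      (1 / (M : ℝ)) * Real.sqrt (lamMax * (lam * (M : ℝ)) / (lam * (M : ℝ) + lamMin)) *
        (Real.sqrt (L : ℝ) / lam) * euclidNorm r :=
  step_norm_bound_general N M L hM lam hlam Jt G hG lamMin lamMax hpos heig F hF K hK J hJ r
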